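/- For μ > 0 set Ã = 4μ² and B̃ = 16μ³, and define Ẽ₁(μ) := (1/4)·∫₁^∞ B̃·r·e^{2iπ/3} / ( ((r·e^{iπ/3})³ + 1)^{1/2} · Ã · (r·e^{iπ/3} − Ã) ) dr, with the principal branch of the square root (this is the integral of (1/4)·s·B̃/((s³+1)^{1/2}·Ã·(s − Ã)) along the ray from e^{iπ/3} to ∞·e^{iπ/3}). Then there exist constants C > 0 and μ₀ > 0 such that | Im Ẽ₁(μ) + π/2 | ≤ C/μ for all μ ≥ μ₀; equivalently, Ẽ₁(μ) − conj(Ẽ₁(μ)) = −π·i + O(μ^{−1}) as μ → +∞. -/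

import Mathlib

noncomputable section

/-- The quantity `Ẽ₁(μ)` along the curve `b = 2a^{3/2}`, with `Ã = 4μ²`, `B̃ = 16μ³`. -/
def E1tilde (μ : ℝ) : ℂ :=
  (1 / 4) * ∫ r in Set.Ioi (1 : ℝ),
    ((16 * μ ^ 3 : ℝ) : ℂ) * (r : ℂ) * Complex.exp (2 * (Real.pi : ℂ) * Complex.I / 3) /
      ((((r : ℂ) * Complex.exp ((Real.pi : ℂ) * Complex.I / 3)) ^ 3 + 1) ^ ((1 : ℂ) / 2) *
        ((4 * μ ^ 2 : ℝ) : ℂ) *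
        ((r : ℂ) * Complex.exp ((Real.pi : ℂ) * Complex.I / 3) - ((4 * μ ^ 2 : ℝ) : ℂ)))

namespace S15

open MeasureTheory Set Filter Topology Complex


def w : ℂ := Complex.exp ((Real.pi : ℂ) * Complex.I / 3)

lemma w_eq : w = ((1/2 : ℝ) : ℂ) + ((Real.sqrt 3 / 2 : ℝ) : ℂ) * Complex.I := by
  have h : ((Real.pi : ℂ) * Complex.I / 3) = ((Real.pi/3 : ℝ) : ℂ) * Complex.I := by
    push_cast; ring
  rw [w, h, Complex.exp_mul_I, ← Complex.ofReal_cos, ← Complex.ofReal_sin,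
    Real.cos_pi_div_three, Real.sin_pi_div_three]

lemma w_im : w.im = Real.sqrt 3 / 2 := by rw [w_eq]; simp
lemma w_re : w.re = 1 / 2 := by rw [w_eq]; simp
lemma w_ne : w ≠ 0 := Complex.exp_ne_zero _
lemma abs_w : ‖w‖ = 1 := by
  rw [w, Complex.norm_exp]; norm_num

lemma w_cubed : w ^ 3 = -1 := by
  rw [w, ← Complex.exp_nat_mul]
  have h : ((3:ℕ):ℂ) * ((Real.pi : ℂ) * Complex.I / 3) = (Real.pi : ℂ) * Complex.I := by
    push_cast; ring
  rw [h, Complex.exp_pi_mul_I]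

lemma w_sq : Complex.exp (2 * (Real.pi : ℂ) * Complex.I / 3) = w ^ 2 := by
  rw [w, ← Complex.exp_nat_mul]
  congr 1
  push_cast; ring

lemma s3_sq : (Real.sqrt 3) ^ 2 = 3 := Real.sq_sqrt (by norm_num)
lemma s3_pos : 0 < Real.sqrt 3 := Real.sqrt_pos.mpr (by norm_num)
lemma one_lt_s3 : 1 < Real.sqrt 3 := by
  nlinarith [s3_sq, s3_pos]

/-- `c = √3 μ - μ i`, a square root of `4 μ² / ω`. -/
def c (μ : ℝ) : ℂ := ((Real.sqrt 3 * μ : ℝ) : ℂ) - (μ : ℂ) * Complex.I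

lemma c_im (μ : ℝ) : (c μ).im = -μ := by simp [c]
lemma c_re (μ : ℝ) : (c μ).re = Real.sqrt 3 * μ := by simp [c]

lemma I_mul_c (μ : ℝ) : Complex.I * c μ = 2 * μ * w := by
  rw [c, w_eq]
  have h3 : ((Real.sqrt 3 : ℝ) : ℂ) ^ 2 = 3 := by
    rw [← Complex.ofReal_pow, s3_sq]; norm_num
  push_cast
  ring_nf
  rw [Complex.I_sq]
  ring

lemma w_mul_c_sq (μ : ℝ) : w * c μ ^ 2 = 4 * (μ:ℂ) ^ 2 := by
  have h := I_mul_c μ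
  have : (Complex.I * c μ) * (Complex.I * c μ) = (2 * μ * w) * (2 * μ * w) := by rw [h]
  have hI : Complex.I * Complex.I = -1 := Complex.I_mul_I
  have h2 : - c μ ^ 2 = 4 * (μ:ℂ)^2 * w^2 := by
    calc - c μ ^ 2 = (Complex.I * c μ) * (Complex.I * c μ) := by
          rw [show (Complex.I * c μ) * (Complex.I * c μ) = (Complex.I*Complex.I) * (c μ * c μ) by ring, hI]; ring
      _ = 4 * (μ:ℂ)^2 * w^2 := by rw [h]; ring
  have hw3 := w_cubed
  calc w * c μ ^ 2 = w * -(4 * (μ:ℂ)^2 * w^2) := by rw [← h2]; ring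
    _ = -(4 * (μ:ℂ)^2) * w^3 := by ring
    _ = 4 * (μ:ℂ)^2 := by rw [hw3]; ring


/-- principal square root of a negative real -/
lemma cpow_half_neg {x : ℝ} (hx : x < 0) :
    (x : ℂ) ^ ((1:ℂ)/2) = Complex.I * (Real.sqrt (-x) : ℝ) := by
  have hx0 : (x : ℂ) ≠ 0 := by exact_mod_cast hx.ne
  have hlog : Complex.log (x : ℂ) = ((Real.log (-x) : ℝ) : ℂ) + (Real.pi : ℂ) * Complex.I := by
    apply Complex.ext
    · simp [Complex.log_re, Complex.norm_real, Real.norm_eq_abs, abs_of_neg hx]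
    · simp [Complex.log_im, Complex.arg_ofReal_of_neg hx]
  rw [Complex.cpow_def_of_ne_zero hx0, hlog]
  rw [show (((Real.log (-x) : ℝ) : ℂ) + (Real.pi : ℂ) * Complex.I) * ((1:ℂ)/2)
      = ((Real.log (-x) / 2 : ℝ) : ℂ) + ((Real.pi/2 : ℝ) : ℂ) * Complex.I by push_cast; ring]
  rw [Complex.exp_add, Complex.exp_mul_I, ← Complex.ofReal_cos, ← Complex.ofReal_sin,
    Real.cos_pi_div_two, Real.sin_pi_div_two, ← Complex.ofReal_exp]
  have : Real.exp (Real.log (-x) / 2) = Real.sqrt (-x) := by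
    rw [Real.sqrt_eq_rpow, Real.rpow_def_of_pos (by linarith)]
    ring_nf
  rw [this]
  push_cast
  ring



/-- denominator linear factor -/
def D (μ r : ℝ) : ℂ := (r : ℂ) * w - ((4 * μ^2 : ℝ) : ℂ)

lemma D_im (μ r : ℝ) : (D μ r).im = r * (Real.sqrt 3 / 2) := by
  simp [D, w_im, Complex.mul_im, pow_two]

lemma D_ne (μ : ℝ) {r : ℝ} (hr : 0 < r) : D μ r ≠ 0 := by
  intro h
  have := D_im μ r
  rw [h] at this
  simp at this
  nlinarith [Real.sqrt_pos.mpr (show (0:ℝ) < 3 by norm_num)]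

def mainf (μ r : ℝ) : ℂ :=
  (μ : ℂ) * w^2 / (Complex.I * ((Real.sqrt r : ℝ) : ℂ) * D μ r)

def G (μ r : ℝ) : ℂ :=
  (1/2 : ℂ) * (Complex.log (((Real.sqrt r : ℝ) : ℂ) - c μ)
    - Complex.log (((Real.sqrt r : ℝ) : ℂ) + c μ))

lemma G_hasDeriv {μ : ℝ} (hμ : 0 < μ) {r : ℝ} (hr : 0 < r) :
    HasDerivAt (G μ) (mainf μ r) r := by
  have hsr : 0 < Real.sqrt r := Real.sqrt_pos.mpr hr
  have hs : HasDerivAt (fun t : ℝ => ((Real.sqrt t : ℝ) : ℂ))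
      (((1 / (2 * Real.sqrt r) : ℝ) : ℂ)) r := (Real.hasDerivAt_sqrt hr.ne').ofReal_comp
  have h1 : HasDerivAt (fun t : ℝ => ((Real.sqrt t : ℝ) : ℂ) - c μ)
      (((1 / (2 * Real.sqrt r) : ℝ) : ℂ)) r := hs.sub_const _
  have h2 : HasDerivAt (fun t : ℝ => ((Real.sqrt t : ℝ) : ℂ) + c μ)
      (((1 / (2 * Real.sqrt r) : ℝ) : ℂ)) r := hs.add_const _
  have hm1 : (((Real.sqrt r : ℝ) : ℂ) - c μ) ∈ Complex.slitPlane := by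
    rw [Complex.mem_slitPlane_iff]
    right
    simp [c_im, hμ.ne']
  have hm2 : (((Real.sqrt r : ℝ) : ℂ) + c μ) ∈ Complex.slitPlane := by
    rw [Complex.mem_slitPlane_iff]
    right
    simp [Complex.add_im, c_im]
    exact hμ.ne'
  have hl1 := h1.clog_real hm1
  have hl2 := h2.clog_real hm2
  have := ((hl1.sub hl2).const_mul (1/2 : ℂ))
  refine this.congr_deriv ?_
  -- algebra
  have hu2 : ((Real.sqrt r : ℝ) : ℂ)^2 = (r : ℂ) := by
    rw [← Complex.ofReal_pow, Real.sq_sqrt hr.le]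
  have hune : ((Real.sqrt r : ℝ) : ℂ) ≠ 0 := by exact_mod_cast hsr.ne'
  have hne1 : ((Real.sqrt r : ℝ) : ℂ) - c μ ≠ 0 := Complex.slitPlane_ne_zero hm1
  have hne2 : ((Real.sqrt r : ℝ) : ℂ) + c μ ≠ 0 := Complex.slitPlane_ne_zero hm2
  have hDne : D μ r ≠ 0 := D_ne μ hr
  have hD : D μ r = w * (((Real.sqrt r : ℝ) : ℂ) - c μ) * (((Real.sqrt r : ℝ) : ℂ) + c μ) := by
    rw [D]
    have := w_mul_c_sq μ
    push_cast
    linear_combination this - w * hu2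
  have hIc := I_mul_c μ
  have hIne : Complex.I ≠ 0 := Complex.I_ne_zero
  have hwne : w ≠ 0 := w_ne
  set u : ℂ := ((Real.sqrt r : ℝ) : ℂ) with hu
  have hcast : ((1/(2*Real.sqrt r) : ℝ) : ℂ) = 1/(2*u) := by rw [hu]; push_cast; ring
  rw [mainf, hD, hcast]
  have hsub : 1/(2*u)/(u - c μ) - 1/(2*u)/(u + c μ) = c μ/(u*((u - c μ)*(u + c μ))) := by
    field_simp
    ring
  rw [hsub]
  rw [show (1/2:ℂ) * (c μ / (u * ((u - c μ) * (u + c μ))))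
      = c μ / ((u * ((u - c μ) * (u + c μ))) * 2) by rw [one_div, inv_mul_eq_div, div_div],
    div_eq_div_iff (by simp [hIne, hune, hwne, hne1, hne2, hsr.ne'])
      (by simp [hIne, hune, hwne, hne1, hne2, hsr.ne'])]
  linear_combination (u * w * ((u - c μ) * (u + c μ))) * hIc




lemma tendsto_sqrt_atTop : Tendsto Real.sqrt atTop atTop := by
  apply Tendsto.congr' _ (tendsto_rpow_atTop (by norm_num : (0:ℝ) < 1/2))
  filter_upwards [eventually_ge_atTop (0:ℝ)] with x hx
  rw [Real.sqrt_eq_rpow]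

lemma G_tendsto {μ : ℝ} (hμ : 0 < μ) : Tendsto (G μ) atTop (𝓝 0) := by
  have hq : Tendsto (fun r : ℝ => c μ / ((Real.sqrt r : ℝ) : ℂ)) atTop (𝓝 0) := by
    have h1 : Tendsto (fun r : ℝ => (Real.sqrt r)⁻¹) atTop (𝓝 0) :=
      tendsto_inv_atTop_zero.comp tendsto_sqrt_atTop
    have h2 : Tendsto (fun r : ℝ => (((Real.sqrt r)⁻¹ : ℝ) : ℂ)) atTop (𝓝 0) := by
      have := (Complex.continuous_ofReal.tendsto 0).comp h1
      simpa [Function.comp_def] using this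
    have := h2.const_mul (c μ)
    simp only [mul_zero] at this
    apply this.congr
    intro r
    rw [Complex.ofReal_inv]
    ring
  have hcont : ContinuousAt Complex.log 1 := _root_.continuousAt_clog (by
    rw [Complex.mem_slitPlane_iff]; left; norm_num)
  have hl1 : Tendsto (fun r : ℝ => Complex.log (1 - c μ / ((Real.sqrt r : ℝ) : ℂ)))
      atTop (𝓝 0) := by
    have : Tendsto (fun r : ℝ => 1 - c μ / ((Real.sqrt r : ℝ) : ℂ)) atTop (𝓝 1) := by
      simpa using (tendsto_const_nhds.sub hq)
    have := hcont.tendsto.comp this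
    simpa [Function.comp_def] using this
  have hl2 : Tendsto (fun r : ℝ => Complex.log (1 + c μ / ((Real.sqrt r : ℝ) : ℂ)))
      atTop (𝓝 0) := by
    have : Tendsto (fun r : ℝ => 1 + c μ / ((Real.sqrt r : ℝ) : ℂ)) atTop (𝓝 1) := by
      simpa using (tendsto_const_nhds.add hq)
    have := hcont.tendsto.comp this
    simpa [Function.comp_def] using this
  have hH : Tendsto (fun r : ℝ => (1/2 : ℂ) *
      (Complex.log (1 - c μ / ((Real.sqrt r : ℝ) : ℂ))
        - Complex.log (1 + c μ / ((Real.sqrt r : ℝ) : ℂ)))) atTop (𝓝 0) := by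
    have := (hl1.sub hl2).const_mul (1/2 : ℂ)
    simpa using this
  apply Tendsto.congr' _ hH
  filter_upwards [eventually_gt_atTop (0:ℝ)] with r hr
  have hsr : 0 < Real.sqrt r := Real.sqrt_pos.mpr hr
  have hsrC : ((Real.sqrt r : ℝ) : ℂ) ≠ 0 := by exact_mod_cast hsr.ne'
  have him1 : (1 - c μ / ((Real.sqrt r : ℝ) : ℂ)).im = μ / Real.sqrt r := by
    simp [Complex.sub_im, Complex.div_ofReal_im, c_im, neg_div]
  have him2 : (1 + c μ / ((Real.sqrt r : ℝ) : ℂ)).im = -(μ / Real.sqrt r) := by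
    simp [Complex.add_im, Complex.div_ofReal_im, c_im, neg_div]
  have hne1 : 1 - c μ / ((Real.sqrt r : ℝ) : ℂ) ≠ 0 := by
    intro h
    have h' := congrArg Complex.im h
    rw [him1] at h'
    simp at h'
    rcases h' with h' | h'
    · exact hμ.ne' h'
    · exact hsr.ne' h'
  have hne2 : 1 + c μ / ((Real.sqrt r : ℝ) : ℂ) ≠ 0 := by
    intro h
    have h' := congrArg Complex.im h
    rw [him2] at h'
    simp at h'
    rcases h' with h' | h'
    · exact hμ.ne' h'
    · exact hsr.ne' h'
  have e1 : ((Real.sqrt r : ℝ) : ℂ) - c μ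
      = (Real.sqrt r : ℝ) * (1 - c μ / ((Real.sqrt r : ℝ) : ℂ)) := by
    field_simp
  have e2 : ((Real.sqrt r : ℝ) : ℂ) + c μ
      = (Real.sqrt r : ℝ) * (1 + c μ / ((Real.sqrt r : ℝ) : ℂ)) := by
    field_simp
  rw [G, e1, e2, Complex.log_ofReal_mul hsr hne1, Complex.log_ofReal_mul hsr hne2]
  ring



lemma D_re (μ r : ℝ) : (D μ r).re = r / 2 - 4 * μ^2 := by
  simp [D, w_re, Complex.mul_re, pow_two]
  ring
lemma abs_D_ge_r {μ r : ℝ} (hr : 0 ≤ r) : Real.sqrt 3 / 2 * r ≤ ‖D μ r‖ := by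
  have h := Complex.abs_im_le_norm (D μ r)
  rw [D_im] at h
  rw [_root_.abs_of_nonneg (by positivity : (0:ℝ) ≤ r * (Real.sqrt 3 / 2))] at h
  linarith

lemma abs_D_ge_mu (μ r : ℝ) : 2 * Real.sqrt 3 * μ^2 ≤ ‖D μ r‖ := by
  have h : (2 * Real.sqrt 3 * μ^2)^2 ≤ Complex.normSq (D μ r) := by
    rw [Complex.normSq_apply, D_re, D_im]
    nlinarith [s3_sq, sq_nonneg (r - 2*μ^2), sq_nonneg μ, s3_pos]
  calc 2 * Real.sqrt 3 * μ^2 = Real.sqrt ((2 * Real.sqrt 3 * μ^2)^2) := by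
        rw [Real.sqrt_sq (by positivity)]
    _ ≤ Real.sqrt (Complex.normSq (D μ r)) := Real.sqrt_le_sqrt h
    _ = ‖D μ r‖ := by rw [Complex.norm_def]


lemma norm_mainf {μ r : ℝ} (hμ : 0 ≤ μ) (hr : 0 ≤ r) :
    ‖mainf μ r‖ = μ / (Real.sqrt r * ‖D μ r‖) := by
  rw [mainf, norm_div, norm_mul, norm_mul, norm_mul, norm_pow, abs_w,
    Complex.norm_I, Complex.norm_real, Complex.norm_real, Real.norm_eq_abs, Real.norm_eq_abs,
    _root_.abs_of_nonneg hμ, _root_.abs_of_nonneg (Real.sqrt_nonneg r)]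
  ring

lemma rpow_neg32 {r : ℝ} (hr : 0 < r) : r ^ (-(3/2) : ℝ) = 1 / (Real.sqrt r * r) := by
  have h1 : r ^ ((3:ℝ)/2) = r * Real.sqrt r := by
    rw [show (3:ℝ)/2 = 1 + 1/2 by norm_num, Real.rpow_add hr, Real.rpow_one,
      ← Real.sqrt_eq_rpow]
  rw [Real.rpow_neg hr.le, h1]
  rw [one_div]
  ring_nf

lemma mainf_contOn (μ : ℝ) : ContinuousOn (mainf μ) (Ioi 1) := by
  apply ContinuousOn.div continuousOn_const
  · apply ContinuousOn.mul
    · exact (continuous_const.mul (Complex.continuous_ofReal.comp Real.continuous_sqrt)).continuousOn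
    · apply ContinuousOn.sub
      · exact (Complex.continuous_ofReal.mul continuous_const).continuousOn
      · exact continuousOn_const
  · intro r hr
    have hr1 : (1:ℝ) < r := hr
    have hD : D μ r ≠ 0 := D_ne μ (by linarith)
    have hsr : ((Real.sqrt r : ℝ) : ℂ) ≠ 0 := by
      exact_mod_cast (Real.sqrt_pos.mpr (by linarith)).ne'
    exact mul_ne_zero (mul_ne_zero Complex.I_ne_zero hsr) hD

lemma mainf_integrable {μ : ℝ} (hμ : 0 < μ) : IntegrableOn (mainf μ) (Ioi 1) := by
  have hbound : ∀ r ∈ Ioi (1:ℝ), ‖mainf μ r‖ ≤ (2*μ/Real.sqrt 3) * r ^ (-(3/2) : ℝ) := by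
    intro r hr
    have hr1 : (1:ℝ) < r := hr
    have hr0 : (0:ℝ) < r := by linarith
    rw [norm_mainf hμ.le hr0.le, rpow_neg32 hr0]
    have h1 : Real.sqrt 3 / 2 * r ≤ ‖D μ r‖ := abs_D_ge_r hr0.le
    have hsr : 0 < Real.sqrt r := Real.sqrt_pos.mpr hr0
    have hda : 0 < Real.sqrt 3 / 2 * r := by positivity
    have h2 : Real.sqrt r * (Real.sqrt 3 / 2 * r) ≤ Real.sqrt r * ‖D μ r‖ := by
      apply mul_le_mul_of_nonneg_left h1 hsr.le
    calc μ / (Real.sqrt r * ‖D μ r‖)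
        ≤ μ / (Real.sqrt r * (Real.sqrt 3 / 2 * r)) := by
          apply div_le_div_of_nonneg_left hμ.le (by positivity) h2
      _ = (2*μ/Real.sqrt 3) * (1 / (Real.sqrt r * r)) := by
          field_simp
  have hint : IntegrableOn (fun r : ℝ => (2*μ/Real.sqrt 3) * r ^ (-(3/2) : ℝ)) (Ioi 1) :=
    (integrableOn_Ioi_rpow_of_lt (by norm_num) one_pos).const_mul _
  apply Integrable.mono' hint ((mainf_contOn μ).aestronglyMeasurable measurableSet_Ioi)
  · filter_upwards [ae_restrict_mem measurableSet_Ioi] with r hr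
    exact hbound r hr

lemma mainf_integral {μ : ℝ} (hμ : 0 < μ) :
    ∫ r in Ioi (1:ℝ), mainf μ r = - G μ 1 := by
  have h := integral_Ioi_of_hasDerivAt_of_tendsto
    (f := G μ) (f' := mainf μ) (a := 1) (m := 0)
    ((G_hasDeriv hμ one_pos).continuousAt.continuousWithinAt)
    (fun x hx => G_hasDeriv hμ (by linarith [mem_Ioi.mp hx]))
    (mainf_integrable hμ) (G_tendsto hμ)
  rw [h]; ring



def ff (μ r : ℝ) : ℂ :=
  (μ : ℂ) * (r : ℂ) * w^2 / (Complex.I * ((Real.sqrt (r^3 - 1) : ℝ) : ℂ) * D μ r)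

def errf (μ r : ℝ) : ℂ := ff μ r - mainf μ r

def psi (r : ℝ) : ℝ := 1 / (r^2 * Real.sqrt (r^3 - 1))

lemma psi_nonneg (r : ℝ) : 0 ≤ psi r := by unfold psi; positivity

lemma psi_contOn : ContinuousOn psi (Ioi 1) := by
  apply ContinuousOn.div continuousOn_const
  · exact ((continuous_pow 2).mul (Real.continuous_sqrt.comp
      (by continuity))).continuousOn
  · intro r hr
    have hr1 : (1:ℝ) < r := hr
    have h1 : 0 < Real.sqrt (r^3 - 1) := Real.sqrt_pos.mpr (by nlinarith [sq_nonneg r, sq_nonneg (r-1), sq_nonneg (r+1)])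
    have h2 : 0 < r^2 := by positivity
    exact (mul_pos h2 h1).ne'

lemma rpow_half_shift : IntegrableOn (fun x : ℝ => (x - 1) ^ (-(1/2) : ℝ)) (Ioc 1 2) := by
  have h0 : IntervalIntegrable (fun x : ℝ => x ^ (-(1/2):ℝ)) volume 0 1 :=
    intervalIntegral.intervalIntegrable_rpow' (by norm_num)
  have h1 := h0.comp_sub_right 1
  norm_num at h1
  exact (intervalIntegrable_iff_integrableOn_Ioc_of_le (by norm_num)).mp h1

lemma rpow_neg72 {r : ℝ} (hr : 0 < r) :
    r ^ (-(7/2) : ℝ) = 1 / (r^2 * Real.sqrt (r^3)) := by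
  have hs : Real.sqrt (r^3) = r ^ ((3:ℝ)/2) := by
    rw [Real.sqrt_eq_rpow, ← Real.rpow_natCast r 3, ← Real.rpow_mul hr.le]
    norm_num
  have h2 : (r:ℝ)^2 = r ^ ((2:ℝ)) := by
    rw [← Real.rpow_natCast r 2]; norm_num
  rw [hs, h2, ← Real.rpow_add hr, Real.rpow_neg hr.le, one_div]
  norm_num

lemma psi_integrable : IntegrableOn psi (Ioi 1) := by
  have hsplit : Ioi (1:ℝ) = Ioc 1 2 ∪ Ioi 2 := (Ioc_union_Ioi_eq_Ioi (by norm_num)).symm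
  rw [hsplit]
  apply IntegrableOn.union
  · -- on Ioc 1 2, compare with (x-1)^(-1/2)
    apply Integrable.mono' rpow_half_shift
      ((psi_contOn.mono Ioc_subset_Ioi_self).aestronglyMeasurable measurableSet_Ioc)
    filter_upwards [ae_restrict_mem measurableSet_Ioc] with r hr
    obtain ⟨hr1, hr2⟩ := hr
    have h31 : 0 < r^3 - 1 := by nlinarith [sq_nonneg r, sq_nonneg (r-1), sq_nonneg (r+1)]
    have ha : Real.sqrt (r - 1) ≤ Real.sqrt (r^3 - 1) := Real.sqrt_le_sqrt (by nlinarith [sq_nonneg r, sq_nonneg (r-1), sq_nonneg (r+1)])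
    have ha0 : 0 < Real.sqrt (r - 1) := Real.sqrt_pos.mpr (by linarith)
    have hr20 : (1:ℝ) ≤ r^2 := by nlinarith
    rw [Real.norm_eq_abs, _root_.abs_of_nonneg (psi_nonneg r)]
    have hrw : (r - 1) ^ (-(1/2) : ℝ) = 1 / Real.sqrt (r - 1) := by
      rw [Real.rpow_neg (by linarith), Real.sqrt_eq_rpow]
      norm_num
    rw [hrw, psi]
    apply div_le_div_of_nonneg_left one_pos.le ha0
    nlinarith [Real.sqrt_nonneg (r^3 - 1), Real.sqrt_pos.mpr h31]
  · -- on Ioi 2, compare with √2 * r^(-(7/2))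
    have hint : IntegrableOn (fun r : ℝ => Real.sqrt 2 * r ^ (-(7/2) : ℝ)) (Ioi 2) :=
      (integrableOn_Ioi_rpow_of_lt (by norm_num) (by norm_num)).const_mul _
    apply Integrable.mono' hint
      ((psi_contOn.mono (fun x (hx : (2:ℝ) < x) => lt_trans (one_lt_two : (1:ℝ) < 2) hx)).aestronglyMeasurable
        measurableSet_Ioi)
    filter_upwards [ae_restrict_mem measurableSet_Ioi] with r hr
    have hr2 : (2:ℝ) < r := hr
    have hr0 : (0:ℝ) < r := by linarith
    have hcube : (2:ℝ)^3 ≤ r^3 := pow_le_pow_left₀ (by norm_num) hr2.le 3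
    have h31 : 0 < r^3 - 1 := by nlinarith
    have hhalf : r^3 / 2 ≤ r^3 - 1 := by nlinarith
    have ha : Real.sqrt (r^3) / Real.sqrt 2 ≤ Real.sqrt (r^3 - 1) := by
      rw [← Real.sqrt_div' (r^3)]
      · exact Real.sqrt_le_sqrt (by linarith)
      · norm_num
    rw [Real.norm_eq_abs, _root_.abs_of_nonneg (psi_nonneg r), rpow_neg72 hr0, psi]
    have hs2 : 0 < Real.sqrt 2 := by positivity
    have hs3 : 0 < Real.sqrt (r^3) := Real.sqrt_pos.mpr (by positivity)
    rw [mul_one_div, div_le_div_iff₀ (by positivity) (by positivity)]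
    calc 1 * (r^2 * Real.sqrt (r^3)) = Real.sqrt 2 * (r^2 * (Real.sqrt (r^3) / Real.sqrt 2)) := by
          field_simp
      _ ≤ Real.sqrt 2 * (r^2 * Real.sqrt (r^3 - 1)) := by
          apply mul_le_mul_of_nonneg_left _ hs2.le
          apply mul_le_mul_of_nonneg_left ha (by positivity)

/-- the constant -/
def K : ℝ := ∫ r in Ioi (1:ℝ), psi r

lemma K_nonneg : 0 ≤ K :=
  setIntegral_nonneg measurableSet_Ioi fun r _ => psi_nonneg r



lemma errf_eq {μ : ℝ} {r : ℝ} (hr : 1 < r) :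
    errf μ r = ((μ : ℂ) * (r : ℂ) * w^2 / (Complex.I * D μ r)) *
      ((((Real.sqrt (r^3 - 1))⁻¹ - (Real.sqrt (r^3))⁻¹ : ℝ)) : ℂ) := by
  have hr0 : (0:ℝ) < r := by linarith
  have h31 : (0:ℝ) < r^3 - 1 := by nlinarith [sq_nonneg r, sq_nonneg (r-1), sq_nonneg (r+1)]
  have ha : 0 < Real.sqrt (r^3 - 1) := Real.sqrt_pos.mpr h31
  have hsr : 0 < Real.sqrt r := Real.sqrt_pos.mpr hr0
  have hb : Real.sqrt (r^3) = r * Real.sqrt r := by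
    rw [pow_succ, pow_two, Real.sqrt_mul (by positivity), Real.sqrt_mul_self hr0.le]
  have haC : ((Real.sqrt (r^3 - 1) : ℝ) : ℂ) ≠ 0 := by exact_mod_cast ha.ne'
  have hsrC : ((Real.sqrt r : ℝ) : ℂ) ≠ 0 := by exact_mod_cast hsr.ne'
  have hD : D μ r ≠ 0 := D_ne μ hr0
  have hrC : (r : ℂ) ≠ 0 := by exact_mod_cast hr0.ne'
  rw [errf, ff, mainf, hb]
  push_cast
  field_simp

lemma norm_errf_le {μ : ℝ} (hμ : 1 ≤ μ) {r : ℝ} (hr : 1 < r) :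
    ‖errf μ r‖ ≤ 1 / (2 * Real.sqrt 3 * μ) * psi r := by
  have hμ0 : (0:ℝ) < μ := by linarith
  have hr0 : (0:ℝ) < r := by linarith
  have h31 : (0:ℝ) < r^3 - 1 := by nlinarith [sq_nonneg r, sq_nonneg (r-1), sq_nonneg (r+1)]
  set a := Real.sqrt (r^3 - 1) with ha_def
  set b := Real.sqrt (r^3) with hb_def
  have ha : 0 < a := Real.sqrt_pos.mpr h31
  have hb : 0 < b := Real.sqrt_pos.mpr (by positivity)
  have ha2 : a^2 = r^3 - 1 := Real.sq_sqrt h31.le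
  have hb2 : b^2 = r^3 := Real.sq_sqrt (by positivity)
  have hab : a ≤ b := Real.sqrt_le_sqrt (by linarith)
  have hΔnn : 0 ≤ a⁻¹ - b⁻¹ := by
    have := inv_anti₀ ha hab
    linarith
  have hΔ : a⁻¹ - b⁻¹ ≤ 1 / (a * r^3) := by
    have hdiff : b^2 - a^2 = 1 := by rw [ha2, hb2]; ring
    rw [inv_eq_one_div, inv_eq_one_div, div_sub_div _ _ ha.ne' hb.ne', ← hb2,
      div_le_div_iff₀ (by positivity) (by positivity)]
    have h1 : (b - a) * b ≤ 1 := by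
      nlinarith [mul_nonneg ha.le (sub_nonneg.mpr hab)]
    calc (1 * b - a * 1) * (a * b ^ 2) = ((b - a) * b) * (a * b) := by ring
      _ ≤ 1 * (a * b) := mul_le_mul_of_nonneg_right h1 (by positivity)
  have hnorm : ‖errf μ r‖ = μ * r / ‖D μ r‖ * (a⁻¹ - b⁻¹) := by
    rw [errf_eq hr]
    simp only [norm_mul, norm_div, norm_pow, abs_w, Complex.norm_I,
      Complex.norm_real, Real.norm_eq_abs]
    rw [_root_.abs_of_nonneg hμ0.le, _root_.abs_of_nonneg hr0.le, _root_.abs_of_nonneg hΔnn]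
    ring
  rw [hnorm]
  have hDpos : 0 < ‖D μ r‖ :=
    lt_of_lt_of_le (by positivity) (abs_D_ge_mu μ r)
  have h1 : μ * r / ‖D μ r‖ * (a⁻¹ - b⁻¹)
      ≤ μ * r / (2 * Real.sqrt 3 * μ^2) * (a⁻¹ - b⁻¹) := by
    apply mul_le_mul_of_nonneg_right _ hΔnn
    apply div_le_div_of_nonneg_left (by positivity) (by positivity) (abs_D_ge_mu μ r)
  have h2 : μ * r / (2 * Real.sqrt 3 * μ^2) * (a⁻¹ - b⁻¹)
      ≤ μ * r / (2 * Real.sqrt 3 * μ^2) * (1 / (a * r^3)) := by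
    apply mul_le_mul_of_nonneg_left hΔ (by positivity)
  have h3 : μ * r / (2 * Real.sqrt 3 * μ^2) * (1 / (a * r^3))
      = 1 / (2 * Real.sqrt 3 * μ) * psi r := by
    rw [psi, ← ha_def]
    field_simp
  linarith


lemma ff_contOn (μ : ℝ) : ContinuousOn (ff μ) (Ioi 1) := by
  unfold ff D
  apply ContinuousOn.div
  · fun_prop
  · fun_prop
  · intro r hr
    have hr1 : (1:ℝ) < r := hr
    have h31 : (0:ℝ) < r^3 - 1 := by nlinarith [sq_nonneg r, sq_nonneg (r-1), sq_nonneg (r+1)]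
    have haC : ((Real.sqrt (r^3 - 1) : ℝ) : ℂ) ≠ 0 := by
      exact_mod_cast (Real.sqrt_pos.mpr h31).ne'
    have hD : D μ r ≠ 0 := D_ne μ (show (0:ℝ) < r by linarith)
    rw [D] at hD
    exact mul_ne_zero (mul_ne_zero Complex.I_ne_zero haC) hD

lemma errf_contOn (μ : ℝ) : ContinuousOn (errf μ) (Ioi 1) :=
  (ff_contOn μ).sub (mainf_contOn μ)

lemma errf_integrable {μ : ℝ} (hμ : 1 ≤ μ) : IntegrableOn (errf μ) (Ioi 1) := by
  apply Integrable.mono' (psi_integrable.const_mul (1 / (2 * Real.sqrt 3 * μ)))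
    ((errf_contOn μ).aestronglyMeasurable measurableSet_Ioi)
  filter_upwards [ae_restrict_mem measurableSet_Ioi] with r hr
  exact norm_errf_le hμ hr

lemma errf_int_bound {μ : ℝ} (hμ : 1 ≤ μ) :
    ‖∫ r in Ioi (1:ℝ), errf μ r‖ ≤ 1 / (2 * Real.sqrt 3 * μ) * K := by
  calc ‖∫ r in Ioi (1:ℝ), errf μ r‖ ≤ ∫ r in Ioi (1:ℝ), ‖errf μ r‖ :=
        norm_integral_le_integral_norm _
    _ ≤ ∫ r in Ioi (1:ℝ), 1 / (2 * Real.sqrt 3 * μ) * psi r := by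
        apply setIntegral_mono_on ((errf_integrable hμ).norm)
          (psi_integrable.const_mul _) measurableSet_Ioi
        intro r hr
        exact norm_errf_le hμ hr
    _ = 1 / (2 * Real.sqrt 3 * μ) * K := by
        rw [K, integral_const_mul]




lemma integrand_eq {μ : ℝ} (hμ : 1 ≤ μ) {r : ℝ} (hr : r ∈ Ioi (1:ℝ)) :
    ((16 * μ ^ 3 : ℝ) : ℂ) * (r : ℂ) * Complex.exp (2 * (Real.pi : ℂ) * Complex.I / 3) /
      ((((r : ℂ) * Complex.exp ((Real.pi : ℂ) * Complex.I / 3)) ^ 3 + 1) ^ ((1 : ℂ) / 2) *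
        ((4 * μ ^ 2 : ℝ) : ℂ) *
        ((r : ℂ) * Complex.exp ((Real.pi : ℂ) * Complex.I / 3) - ((4 * μ ^ 2 : ℝ) : ℂ)))
    = 4 * ff μ r := by
  have hr1 : (1:ℝ) < r := hr
  have hμ0 : (0:ℝ) < μ := by linarith
  have h31 : (0:ℝ) < r^3 - 1 := by nlinarith [sq_nonneg r, sq_nonneg (r-1), sq_nonneg (r+1)]
  have hbase : ((r : ℂ) * Complex.exp ((Real.pi : ℂ) * Complex.I / 3)) ^ 3 + 1
      = (((1 - r^3 : ℝ)) : ℂ) := by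
    rw [mul_pow, show Complex.exp ((Real.pi : ℂ) * Complex.I / 3) = w from rfl, w_cubed]
    push_cast
    ring
  have hpow : ((((r : ℂ) * Complex.exp ((Real.pi : ℂ) * Complex.I / 3)) ^ 3 + 1)) ^ ((1:ℂ)/2)
      = Complex.I * ((Real.sqrt (r^3 - 1) : ℝ) : ℂ) := by
    rw [hbase, cpow_half_neg (by linarith : (1 - r^3 : ℝ) < 0)]
    norm_num
  have hDne := D_ne μ (show (0:ℝ) < r by linarith)
  rw [D] at hDne
  have hD : Complex.I * ((Real.sqrt (r^3 - 1) : ℝ) : ℂ) * ((4 * μ ^ 2 : ℝ) : ℂ) *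
      ((r:ℂ) * w - ((4 * μ ^ 2 : ℝ) : ℂ)) ≠ 0 := by
    apply mul_ne_zero (mul_ne_zero (mul_ne_zero Complex.I_ne_zero _) _) hDne
    · exact_mod_cast (Real.sqrt_pos.mpr h31).ne'
    · exact_mod_cast (by positivity : (0:ℝ) < 4 * μ^2).ne'
  have hD2 : Complex.I * ((Real.sqrt (r^3 - 1) : ℝ) : ℂ) *
      ((r:ℂ) * w - ((4 * μ ^ 2 : ℝ) : ℂ)) ≠ 0 := by
    apply mul_ne_zero (mul_ne_zero Complex.I_ne_zero _) hDne
    exact_mod_cast (Real.sqrt_pos.mpr h31).ne'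
  rw [hpow, w_sq, show Complex.exp ((Real.pi : ℂ) * Complex.I / 3) = w from rfl, ff, D,
    ← mul_div_assoc, div_eq_div_iff hD hD2]
  push_cast
  ring

lemma arg_of_re_pos {z : ℂ} (hz : 0 < z.re) : z.arg = Real.arctan (z.im / z.re) := by
  have h1 : Real.tan z.arg = z.im / z.re := Complex.tan_arg z
  have h2 : |z.arg| < Real.pi/2 := Complex.abs_arg_lt_pi_div_two_iff.mpr (Or.inl hz)
  obtain ⟨hl, hu⟩ := abs_lt.mp h2
  rw [← h1, Real.arctan_tan (by linarith) hu]

lemma arctan_lipschitz (a b : ℝ) : |Real.arctan a - Real.arctan b| ≤ |a - b| := by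
  have hlip : LipschitzWith 1 Real.arctan := by
    apply lipschitzWith_of_nnnorm_deriv_le Real.differentiable_arctan
    intro x
    rw [Real.deriv_arctan]
    rw [← NNReal.coe_le_coe, coe_nnnorm, Real.norm_eq_abs, NNReal.coe_one,
      _root_.abs_of_pos (by positivity), div_le_one (by positivity)]
    nlinarith [sq_nonneg x]
  have := hlip.dist_le_mul a b
  simpa [Real.dist_eq] using this

lemma im_main {μ : ℝ} (hμ : 1 ≤ μ) :
    |(- G μ 1).im + Real.pi/2| ≤ 1 / (2 * μ) := by
  have hμ0 : (0:ℝ) < μ := by linarith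
  have hs3μ : 1 < Real.sqrt 3 * μ := by nlinarith [one_lt_s3]
  have hsqrt1 : Real.sqrt (1:ℝ) = 1 := Real.sqrt_one
  -- arg (1 + c μ)
  have h1c : ((Real.sqrt (1:ℝ) : ℝ) : ℂ) + c μ = ((1 + Real.sqrt 3 * μ : ℝ) : ℂ) - (μ:ℂ)*Complex.I := by
    rw [hsqrt1, c]; push_cast; ring
  have h1c_re : (((Real.sqrt (1:ℝ) : ℝ) : ℂ) + c μ).re = 1 + Real.sqrt 3 * μ := by
    rw [h1c]; simp
  have h1c_im : (((Real.sqrt (1:ℝ) : ℝ) : ℂ) + c μ).im = -μ := by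
    rw [h1c]; simp
  have harg1 : (((Real.sqrt (1:ℝ) : ℝ) : ℂ) + c μ).arg
      = Real.arctan (-μ / (1 + Real.sqrt 3 * μ)) := by
    rw [arg_of_re_pos (by rw [h1c_re]; positivity), h1c_re, h1c_im]
  -- arg (1 - c μ) via -(1 - c) = c - 1
  have h2c_im_pos : 0 < (((Real.sqrt (1:ℝ) : ℝ) : ℂ) - c μ).im := by
    rw [hsqrt1, c]; simpa using hμ0
  have hneg := Complex.arg_neg_eq_arg_sub_pi_of_im_pos h2c_im_pos
  have h3c : -(((Real.sqrt (1:ℝ) : ℝ) : ℂ) - c μ) = ((Real.sqrt 3 * μ - 1 : ℝ) : ℂ) - (μ:ℂ)*Complex.I := by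
    rw [hsqrt1, c]; push_cast; ring
  have h3c_re : (-(((Real.sqrt (1:ℝ) : ℝ) : ℂ) - c μ)).re = Real.sqrt 3 * μ - 1 := by
    rw [h3c]; simp
  have h3c_im : (-(((Real.sqrt (1:ℝ) : ℝ) : ℂ) - c μ)).im = -μ := by
    rw [h3c]; simp
  have harg2 : (((Real.sqrt (1:ℝ) : ℝ) : ℂ) - c μ).arg
      = Real.arctan (-μ / (Real.sqrt 3 * μ - 1)) + Real.pi := by
    have h := arg_of_re_pos (z := -(((Real.sqrt (1:ℝ) : ℝ) : ℂ) - c μ))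
      (by rw [h3c_re]; linarith)
    rw [h3c_re, h3c_im] at h
    rw [hneg] at h
    linarith [h]
  -- imaginary part of -G μ 1
  have himG : (- G μ 1).im = (1/2) * ((((Real.sqrt (1:ℝ) : ℝ) : ℂ) + c μ).arg
      - (((Real.sqrt (1:ℝ) : ℝ) : ℂ) - c μ).arg) := by
    rw [G]
    simp only [Complex.neg_im, Complex.mul_im, Complex.sub_im, Complex.log_im]
    norm_num
    ring
  rw [himG, harg1, harg2]
  have hkey : |(1/2 : ℝ) * (Real.arctan (-μ / (1 + Real.sqrt 3 * μ))
      - (Real.arctan (-μ / (Real.sqrt 3 * μ - 1)) + Real.pi)) + Real.pi/2|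
      = (1/2) * |Real.arctan (-μ / (1 + Real.sqrt 3 * μ))
        - Real.arctan (-μ / (Real.sqrt 3 * μ - 1))| := by
    rw [show (1/2 : ℝ) * (Real.arctan (-μ / (1 + Real.sqrt 3 * μ))
      - (Real.arctan (-μ / (Real.sqrt 3 * μ - 1)) + Real.pi)) + Real.pi/2
      = (1/2) * (Real.arctan (-μ / (1 + Real.sqrt 3 * μ))
        - Real.arctan (-μ / (Real.sqrt 3 * μ - 1))) by ring]
    rw [abs_mul]
    norm_num
  rw [hkey]
  have hlip := arctan_lipschitz (-μ / (1 + Real.sqrt 3 * μ)) (-μ / (Real.sqrt 3 * μ - 1))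
  have hdiff : |(-μ / (1 + Real.sqrt 3 * μ)) - (-μ / (Real.sqrt 3 * μ - 1))| ≤ 1/μ := by
    have he : (-μ / (1 + Real.sqrt 3 * μ)) - (-μ / (Real.sqrt 3 * μ - 1))
        = 2*μ / (3*μ^2 - 1) := by
      rw [div_sub_div _ _ (by linarith : (1 + Real.sqrt 3 * μ) ≠ 0)
        (by linarith : (Real.sqrt 3 * μ - 1) ≠ 0)]
      rw [show (1 + Real.sqrt 3 * μ) * (Real.sqrt 3 * μ - 1)
          = (Real.sqrt 3)^2 * μ^2 - 1 by ring, s3_sq]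
      congr 1
      ring
    rw [he, _root_.abs_of_nonneg (div_nonneg (by positivity) (by nlinarith : (0:ℝ) ≤ 3*μ^2 - 1))]
    rw [div_le_div_iff₀ (by nlinarith) hμ0]
    nlinarith
  calc (1/2 : ℝ) * |Real.arctan (-μ / (1 + Real.sqrt 3 * μ))
        - Real.arctan (-μ / (Real.sqrt 3 * μ - 1))|
      ≤ (1/2) * (1/μ) := by
        apply mul_le_mul_of_nonneg_left _ (by norm_num)
        exact le_trans hlip hdiff
    _ = 1 / (2*μ) := by ring

theorem stmt15core {μ : ℝ} (hμ : 1 ≤ μ) :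
    |(E1tilde μ).im + Real.pi / 2| ≤ (K / (2 * Real.sqrt 3) + 1/2) / μ := by
  have hμ0 : (0:ℝ) < μ := by linarith
  have hE : E1tilde μ = (- G μ 1) + ∫ r in Ioi (1:ℝ), errf μ r := by
    rw [E1tilde]
    rw [setIntegral_congr_fun measurableSet_Ioi (fun r hr => integrand_eq hμ hr)]
    rw [integral_const_mul]
    rw [show ∫ r in Ioi (1:ℝ), ff μ r = ∫ r in Ioi (1:ℝ), (mainf μ r + errf μ r) from by
      congr 1; funext r; rw [errf]; ring]
    rw [integral_add (mainf_integrable hμ0) (errf_integrable hμ)]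
    rw [mainf_integral hμ0]
    ring
  have him : (E1tilde μ).im = (- G μ 1).im + (∫ r in Ioi (1:ℝ), errf μ r).im := by
    rw [hE]; simp
  have herr : |(∫ r in Ioi (1:ℝ), errf μ r).im| ≤ 1 / (2 * Real.sqrt 3 * μ) * K := by
    calc |(∫ r in Ioi (1:ℝ), errf μ r).im| ≤ ‖∫ r in Ioi (1:ℝ), errf μ r‖ :=
          Complex.abs_im_le_norm _
      _ ≤ 1 / (2 * Real.sqrt 3 * μ) * K := errf_int_bound hμ
  have hmain := im_main hμ
  rw [him]
  have h1 : |(- G μ 1).im + (∫ r in Ioi (1:ℝ), errf μ r).im + Real.pi / 2|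
      ≤ |(- G μ 1).im + Real.pi/2| + |(∫ r in Ioi (1:ℝ), errf μ r).im| := by
    rw [show (- G μ 1).im + (∫ r in Ioi (1:ℝ), errf μ r).im + Real.pi / 2
      = ((- G μ 1).im + Real.pi/2) + (∫ r in Ioi (1:ℝ), errf μ r).im from by ring]
    exact abs_add_le _ _
  have heq : 1 / (2*μ) + 1 / (2 * Real.sqrt 3 * μ) * K
      = (K / (2 * Real.sqrt 3) + 1/2) / μ := by
    field_simp
    ring
  calc |(- G μ 1).im + (∫ r in Ioi (1:ℝ), errf μ r).im + Real.pi / 2|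
      ≤ |(- G μ 1).im + Real.pi/2| + |(∫ r in Ioi (1:ℝ), errf μ r).im| := h1
    _ ≤ 1 / (2*μ) + 1 / (2 * Real.sqrt 3 * μ) * K := add_le_add hmain herr
    _ = (K / (2 * Real.sqrt 3) + 1/2) / μ := heq


end S15

theorem stmt15 :
    ∃ C > (0 : ℝ), ∃ μ₀ > (0 : ℝ), ∀ μ : ℝ, μ₀ ≤ μ →
      |(E1tilde μ).im + Real.pi / 2| ≤ C / μ := by
  refine ⟨S15.K / (2 * Real.sqrt 3) + 1/2, ?_, 1, one_pos, fun μ hμ => S15.stmt15core hμ⟩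
  have h1 := S15.K_nonneg
  have h2 := S15.s3_pos
  positivity

end
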